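/- Let X ⊆ P^{n-1} be a projective variety whose vanishing ideal is minimally generated by homogeneous polynomials f_1,…,f_p of degrees d_1 ≤ … ≤ d_p, and set d = lcm(d_1,…,d_p). Let r_1,…,r_p be the coefficient row vectors of f_1^{d/d_1},…,f_p^{d/d_p} in ℂ^N with N = binom(n-1+d, d), and let C_X be a matrix whose rows form a basis of the span ⟨r_1,…,r_p⟩ ⊆ ℂ^N. Then the Kalman variety K(X) is contained in the subvariety of P^{n²-1} cut out by the maximal minors of the Kalman matrix K_d(C_X). -/

import Mathlib

noncomputable section

/-! ## Zariski topology on complex affine space -/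

/-- The Zariski topology on the affine space `ι → ℂ`: the basic open sets are the
complements of hypersurfaces. -/
def zTop (ι : Type*) : TopologicalSpace (ι → ℂ) :=
  TopologicalSpace.generateFrom
    {U | ∃ p : MvPolynomial ι ℂ, U = {x | MvPolynomial.eval x p ≠ 0}}

/-- Zariski open subset of affine space. -/
def zOpen {ι : Type*} (U : Set (ι → ℂ)) : Prop := @IsOpen _ (zTop ι) U

/-- Zariski closed subset of affine space. -/
def zClosed {ι : Type*} (Z : Set (ι → ℂ)) : Prop := @IsClosed _ (zTop ι) Z

/-- Zariski density. -/
def zDense {ι : Type*} (S : Set (ι → ℂ)) : Prop := @Dense _ (zTop ι) S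

/-- Zariski closure. -/
def zClosure {ι : Type*} (S : Set (ι → ℂ)) : Set (ι → ℂ) := @closure _ (zTop ι) S

/-- Irreducibility in the Zariski topology. -/
def zIrred {ι : Type*} (S : Set (ι → ℂ)) : Prop := @IsIrreducible _ (zTop ι) S

/-- The dimension of a subset of affine space: the topological Krull dimension of the
subspace topology induced by the Zariski topology. -/
def zDim {ι : Type*} (S : Set (ι → ℂ)) : WithBot ℕ∞ :=
  @topologicalKrullDim S (TopologicalSpace.induced Subtype.val (zTop ι))

/-- The common zero set of a family of polynomials. -/
def vanishSet {ι : Type*} (S : Set (MvPolynomial ι ℂ)) : Set (ι → ℂ) :=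
  {x | ∀ p ∈ S, MvPolynomial.eval x p = 0}

/-- The ideal of all polynomials vanishing on a subset of affine space. -/
def vanishingIdealOf {ι : Type*} (X : Set (ι → ℂ)) : Ideal (MvPolynomial ι ℂ) where
  carrier := {p | ∀ x ∈ X, MvPolynomial.eval x p = 0}
  add_mem' := by
    intro a b ha hb x hx
    simp [ha x hx, hb x hx]
  zero_mem' := by
    intro x hx
    simp
  smul_mem' := by
    intro c p hp x hx
    simp [smul_eq_mul, hp x hx]

/-- A subset of `ι → ℂ` is a cone if it is stable under scalar multiplication. -/
def IsCone {ι : Type*} (X : Set (ι → ℂ)) : Prop :=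
  ∀ (c : ℂ) (v : ι → ℂ), v ∈ X → c • v ∈ X

/-- The affine-linear subspace cut out by `k` affine-linear equations whose coefficients are
recorded by `a` (the `none` coordinate records the constant term). -/
def affSlice {ι : Type*} [Fintype ι] {k : ℕ} (a : Fin k × Option ι → ℂ) : Set (ι → ℂ) :=
  {x | ∀ j : Fin k, a (j, none) + ∑ i : ι, a (j, some i) * x i = 0}

/-- `hasConeDegree C k δ` : the projective variety with affine cone `C ⊆ ℂ^ι` and projective
dimension `k` has degree `δ`, expressed by saying that a generic affine-linear slice of `C` of
codimension `k + 1` consists of exactly `δ` points. -/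
def hasConeDegree {ι : Type*} [Fintype ι] (C : Set (ι → ℂ)) (k δ : ℕ) : Prop :=
  ∃ U : Set (Fin (k + 1) × Option ι → ℂ), zOpen U ∧ zDense U ∧
    ∀ a ∈ U, (C ∩ affSlice a).ncard = δ

/-! ## Eigenvectors and the Kalman variety -/

/-- `v` is an eigenvector of the matrix `A`. -/
def IsEigenvector {n : ℕ} (A : Matrix (Fin n) (Fin n) ℂ) (v : Fin n → ℂ) : Prop :=
  v ≠ 0 ∧ ∃ lam : ℂ, A.mulVec v = lam • v

/-- The space of `n × n` complex matrices, presented as an affine space. -/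
abbrev MatSpace (n : ℕ) := Fin n × Fin n → ℂ

/-- The matrix corresponding to a point of `MatSpace n`. -/
def toMat {n : ℕ} (A : MatSpace n) : Matrix (Fin n) (Fin n) ℂ :=
  Matrix.of fun i j => A (i, j)

/-- The affine cone over the Kalman variety `𝒦(X)` of the projective variety whose affine
cone is `X`: all matrices having an eigenvector lying on `X`. -/
def kalmanCone {n : ℕ} (X : Set (Fin n → ℂ)) : Set (MatSpace n) :=
  {A | ∃ v ∈ X, IsEigenvector (toMat A) v}



/-! ## Symmetric powers of matrices and Kalman matrices -/

/-- Index set for the monomials of degree `d` in `n` variables. -/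
abbrev MonIdx (n d : ℕ) := Sym (Fin n) d

/-- The exponent vector of the monomial indexed by `σ`. -/
def monExp {n d : ℕ} (σ : MonIdx n d) : Fin n →₀ ℕ :=
  Multiset.toFinsupp (σ : Multiset (Fin n))

/-- The generic `n × n` matrix, whose entries are the variables of `ℂ[A]`. -/
def genMat (n : ℕ) : Matrix (Fin n) (Fin n) (MvPolynomial (Fin n × Fin n) ℂ) :=
  Matrix.of fun i j => MvPolynomial.X (i, j)

/-- The `d`-th symmetric power `ρ_d(A)` of a square matrix `A`, i.e. the matrix (in the basis of
monomials of degree `d`) of the induced action of `A` on forms of degree `d`: the entry at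
`(τ, σ)` is the coefficient of `x^σ` in `(A·x)^τ`. -/
def symPow {R : Type*} [CommRing R] {n : ℕ} (d : ℕ) (A : Matrix (Fin n) (Fin n) R) :
    Matrix (MonIdx n d) (MonIdx n d) R :=
  Matrix.of fun τ σ =>
    MvPolynomial.coeff (monExp σ)
      (∏ j : Fin n, (∑ k : Fin n, MvPolynomial.C (A j k) * MvPolynomial.X k) ^ (monExp τ j))

/-- The coefficient vector of a form of degree `d`. -/
def coeffVec {n : ℕ} (d : ℕ) (f : MvPolynomial (Fin n) ℂ) : MonIdx n d → ℂ :=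
  fun σ => MvPolynomial.coeff (monExp σ) f

/-- The form of degree `d` with coefficient vector `c`. -/
def polyOf {n d : ℕ} (c : MonIdx n d → ℂ) : MvPolynomial (Fin n) ℂ :=
  ∑ σ : MonIdx n d, MvPolynomial.monomial (monExp σ) (c σ)

/-- The rectangular Kalman matrix of order `d` associated with a `p × N` coefficient matrix `C`:
its rows are the rows of `C`, `C·ρ_d(A)`, ..., `C·ρ_d(A)^{t-1}` for the generic matrix `A`. -/
def kalmanMat {n d p : ℕ} (t : ℕ) (C : Matrix (Fin p) (MonIdx n d) ℂ) :
    Matrix (Fin t × Fin p) (MonIdx n d) (MvPolynomial (Fin n × Fin n) ℂ) :=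
  Matrix.of fun r τ =>
    ∑ κ : MonIdx n d, MvPolynomial.C (C r.2 κ) * ((symPow d (genMat n)) ^ (r.1 : ℕ)) κ τ

/-- The square Kalman matrix `K_d(f)` of a form `f` with coefficient vector `c`: the rows are
`C_f ρ_d(A)^i` for `i = 0, …, N - 1` (indexed by monomials through a fixed enumeration). -/
def kalmanSq {n : ℕ} (d : ℕ) (c : MonIdx n d → ℂ) :
    Matrix (MonIdx n d) (MonIdx n d) (MvPolynomial (Fin n × Fin n) ℂ) :=
  Matrix.of fun σ τ =>
    ∑ κ : MonIdx n d, MvPolynomial.C (c κ) *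
      ((symPow d (genMat n)) ^ ((Fintype.equivFin (MonIdx n d)) σ : ℕ)) κ τ

/-- The determinant of the square Kalman matrix of order `d`. -/
def kalmanDet {n : ℕ} (d : ℕ) (c : MonIdx n d → ℂ) : MvPolynomial (Fin n × Fin n) ℂ :=
  (kalmanSq d c).det

/-- The locus of matrices at which all maximal minors of a (rectangular) matrix of polynomials
in `ℂ[A]` vanish. -/
def maxMinorsZeroSet {n d : ℕ} {ridx : Type*}
    (M : Matrix ridx (MonIdx n d) (MvPolynomial (Fin n × Fin n) ℂ)) : Set (MatSpace n) :=
  {A | ∀ e : MonIdx n d → ridx, Function.Injective e →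
    MvPolynomial.eval A (Matrix.det (Matrix.of fun σ τ => M (e σ) τ)) = 0}



/-! ## Polarizations and μ-Kalman varieties -/

/-- Evaluation of the multihomogeneous polarization `f_μ` of `f` at a tuple of vectors
`v_1, …, v_s` (up to a nonzero rational normalization constant): the coefficient of `t^μ`
in `f(t_1 v_1 + ⋯ + t_s v_s)`. -/
def polarEval {n s : ℕ} (f : MvPolynomial (Fin n) ℂ) (μ : Fin s → ℕ)
    (v : Fin s → Fin n → ℂ) : ℂ :=
  MvPolynomial.coeff (Finsupp.equivFunOnFinite.symm μ)
    (MvPolynomial.eval₂ MvPolynomial.C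
      (fun k => ∑ i : Fin s, MvPolynomial.C (v i k) * MvPolynomial.X i) f)

/-- The affine cone over the `μ`-Kalman variety `𝒦_μ(f)`: the Zariski closure of the set of
matrices admitting linearly independent eigenvectors `v_1, …, v_s` with `f_μ(v_1, …, v_s) = 0`. -/
def muKalmanCone {n : ℕ} (f : MvPolynomial (Fin n) ℂ) {s : ℕ} (μ : Fin s → ℕ) :
    Set (MatSpace n) :=
  zClosure {A | ∃ v : Fin s → (Fin n → ℂ),
    (∀ i, IsEigenvector (toMat A) (v i)) ∧ LinearIndependent ℂ v ∧ polarEval f μ v = 0}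

/-- The parts of a partition of `d`, listed as a tuple. -/
def partTuple (d : ℕ) (μ : Nat.Partition d) : Fin (Multiset.card μ.parts) → ℕ :=
  fun i => μ.parts.toList.get (i.cast (Multiset.length_toList _).symm)

/-- The multiset of nonzero exponents of the monomial indexed by `σ`. -/
def expMultiset {n d : ℕ} (σ : Sym (Fin n) d) : Multiset ℕ :=
  Multiset.filter (fun e => e ≠ 0)
    (Multiset.map (fun i => Multiset.toFinsupp (σ : Multiset (Fin n)) i) Finset.univ.val)

/-! ## Tangent spaces, smooth points and singular loci -/

/-- The Zariski tangent space of `X ⊆ ℂ^ι` at `x`: the common kernel of the differentials at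
`x` of all polynomials vanishing on `X`. -/
def tangentSpace {ι : Type*} [Fintype ι] (X : Set (ι → ℂ)) (x : ι → ℂ) :
    Submodule ℂ (ι → ℂ) where
  carrier := {u | ∀ p : MvPolynomial ι ℂ, (∀ y ∈ X, MvPolynomial.eval y p = 0) →
      ∑ i : ι, u i * MvPolynomial.eval x (MvPolynomial.pderiv i p) = 0}
  add_mem' := by
    intro a b ha hb p hp
    have h1 := ha p hp
    have h2 := hb p hp
    simp only [Pi.add_apply, add_mul, Finset.sum_add_distrib, h1, h2, add_zero]
  zero_mem' := by
    intro p hp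
    simp
  smul_mem' := by
    intro c u hu p hp
    have h1 := hu p hp
    simp only [Pi.smul_apply, smul_eq_mul, mul_assoc, ← Finset.mul_sum, h1, mul_zero]

/-- The local dimension of `X` at `x`, in the Zariski topology. -/
def zLocalDim {ι : Type*} (X : Set (ι → ℂ)) (x : ι → ℂ) : WithBot ℕ∞ :=
  ⨅ (U : Set (ι → ℂ)) (_ : zOpen U) (_ : x ∈ U), zDim (X ∩ U)

/-- `x` is a smooth point of `X`: the Zariski tangent space has dimension equal to the local
dimension of `X` at `x`. -/
def smoothAt {ι : Type*} [Fintype ι] (X : Set (ι → ℂ)) (x : ι → ℂ) : Prop :=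
  ((Module.finrank ℂ (tangentSpace X x) : ℕ∞) : WithBot ℕ∞) = zLocalDim X x

/-- The affine cone over the singular locus of the projective variety whose affine cone is `X`:
the nonzero points of `X` that are not smooth points. -/
def projSingCone {ι : Type*} [Fintype ι] (X : Set (ι → ℂ)) : Set (ι → ℂ) :=
  {x | x ∈ X ∧ x ≠ 0 ∧ ¬ smoothAt X x}

/-- The affine cone over the (reduced) singular locus of the Kalman variety of the projective
variety with affine cone `X`. -/
def singKalmanCone {n : ℕ} (X : Set (Fin n → ℂ)) : Set (MatSpace n) :=
  zClosure (projSingCone (zClosure (kalmanCone X)))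



/-! ## The spaces `ℙ_s = ℙ^{n²-1} × (ℙ^{n-1})^s` (as multicones) -/

/-- Coordinates for the multicone over `ℙ^{n²-1} × (ℙ^{n-1})^{×s}`. -/
abbrev MIdx (n s : ℕ) := (Fin n × Fin n) ⊕ (Fin s × Fin n)

/-- The matrix component of a point of the multicone. -/
def matPart {n s : ℕ} (x : MIdx n s → ℂ) : MatSpace n := fun ij => x (Sum.inl ij)

/-- The `i`-th vector component of a point of the multicone. -/
def vecPart {n s : ℕ} (x : MIdx n s → ℂ) (i : Fin s) : Fin n → ℂ := fun k => x (Sum.inr (i, k))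

/-- A partition of `{1, …, s}` into `k` (indexed) nonempty pairwise disjoint blocks. -/
structure IdxPartition (s k : ℕ) where
  block : Fin k → Finset (Fin s)
  nonempty : ∀ i, (block i).Nonempty
  disj : ∀ i j, i ≠ j → Disjoint (block i) (block j)
  cover : ∀ p : Fin s, ∃ i, p ∈ block i

/-- The minimal representative of the `i`-th block. -/
def IdxPartition.rep {s k : ℕ} (P : IdxPartition s k) (i : Fin k) : Fin s :=
  (P.block i).min' (P.nonempty i)

/-- The finest partition, all of whose blocks are singletons. -/
def singletonPartition (s : ℕ) : IdxPartition s s where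
  block i := {i}
  nonempty i := ⟨i, by simp⟩
  disj i j h := Finset.disjoint_singleton.2 h
  cover p := ⟨p, by simp⟩

/-- A tuple of nonzero vectors is `P`-compatible: vectors within each block of `P` are
proportional, and representatives of the distinct blocks are linearly independent. -/
def PCompatible {n s k : ℕ} (P : IdxPartition s k) (v : Fin s → Fin n → ℂ) : Prop :=
  (∀ p, v p ≠ 0) ∧
  (∀ i, ∀ p ∈ P.block i, ∀ q ∈ P.block i, ∃ c : ℂ, v p = c • v q) ∧
  (∀ r : Fin k → Fin s, (∀ i, r i ∈ P.block i) → LinearIndependent ℂ (fun i => v (r i)))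

/-- The multicone over `W_s`: tuples `(A, v_1, …, v_s)` where each `v_i` is an eigenvector of
the (nonzero) matrix `A`. -/
def Wcone (n s : ℕ) : Set (MIdx n s → ℂ) :=
  {x | matPart x ≠ 0 ∧ ∀ i, IsEigenvector (toMat (matPart x)) (vecPart x i)}

/-- The multicone over `W_{s,P}`: the Zariski closure of the set of tuples in `W_s` whose
vector part is `P`-compatible. -/
def WsPcone (n : ℕ) {s k : ℕ} (P : IdxPartition s k) : Set (MIdx n s → ℂ) :=
  zClosure {x | x ∈ Wcone n s ∧ PCompatible P (fun i => vecPart x i)}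

/-! ## Multidegrees -/

/-- Parameter space for a multiprojective slice of multidegree type `γ`. -/
abbrev MSliceParam (n s : ℕ) (γ : Fin (s + 1) → ℕ) : Type :=
  (Fin (n ^ 2 - γ 0) × Option (Fin n × Fin n)) ⊕ ((Σ j : Fin s, Fin (n - γ j.succ)) × Option (Fin n))

/-- The multiprojective affine-linear slice with parameters `a`: it cuts the matrix factor by
`n² - γ 0` affine-linear equations and the `j`-th vector factor by `n - γ (j+1)` affine-linear
equations. -/
def mSlice {n s : ℕ} (γ : Fin (s + 1) → ℕ) (a : MSliceParam n s γ → ℂ) :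
    Set (MIdx n s → ℂ) :=
  {x | (∀ r : Fin (n ^ 2 - γ 0),
          a (Sum.inl (r, none)) +
            ∑ ij : Fin n × Fin n, a (Sum.inl (r, some ij)) * x (Sum.inl ij) = 0) ∧
       (∀ j : Fin s, ∀ r : Fin (n - γ j.succ),
          a (Sum.inr (⟨j, r⟩, none)) +
            ∑ k : Fin n, a (Sum.inr (⟨j, r⟩, some k)) * x (Sum.inr (j, k)) = 0)}

/-- `hasMD W γ δ` : the coefficient of the monomial `h_0^{γ 0} h_1^{γ 1} ⋯ h_s^{γ s}` in the
Chow class of the multiprojective variety with multicone `W ⊆ ℂ^{n²} × (ℂ^n)^s` equals `δ`: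
a generic multiprojective slice of type `γ` meets `W` in exactly `δ` points. -/
def hasMD {n s : ℕ} (W : Set (MIdx n s → ℂ)) (γ : Fin (s + 1) → ℕ) (δ : ℕ) : Prop :=
  ∃ U : Set (MSliceParam n s γ → ℂ), zOpen U ∧ zDense U ∧
    ∀ a ∈ U, (W ∩ mSlice γ a).ncard = δ

/-- The exponent vector of the monomial `h_0 · h_1^{n-1} ⋯ h_i^{n-2} ⋯ h_s^{n-1}`. -/
def specialExp (n s : ℕ) (i : Fin s) : Fin (s + 1) → ℕ :=
  fun j => if j = 0 then 1 else if j = i.succ then n - 2 else n - 1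

/-- `γ` lies in the box of admissible exponents of the Chow ring of `ℙ^{n²-1} × (ℙ^{n-1})^s`. -/
def inBox (n s : ℕ) (γ : Fin (s + 1) → ℕ) : Prop :=
  γ 0 < n ^ 2 ∧ ∀ j : Fin s, γ j.succ < n

/-- `representsClass W c q` : the polynomial `q` represents the Chow class of the
multiprojective variety with multicone `W`, of codimension `c`: its coefficients in the
admissible box in degree `c` are the multidegrees of `W`, and all other coefficients vanish. -/
def representsClass {n s : ℕ} (W : Set (MIdx n s → ℂ)) (c : ℕ)
    (q : MvPolynomial (Fin (s + 1)) ℤ) : Prop :=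
  (∀ γ : Fin (s + 1) → ℕ, inBox n s γ → (∑ j, γ j) = c →
      ∃ δ : ℕ, q.coeff (Finsupp.equivFunOnFinite.symm γ) = (δ : ℤ) ∧ hasMD W γ δ) ∧
  (∀ γ : Fin (s + 1) → ℕ, ¬ (inBox n s γ ∧ (∑ j, γ j) = c) →
      q.coeff (Finsupp.equivFunOnFinite.symm γ) = 0)

/-! ## The Chow ring of `ℙ^{n²-1} × (ℙ^{n-1})^s` -/

/-- The defining ideal of the Chow ring `ℤ[h_0, …, h_s]/(h_0^{n²}, h_1^n, …, h_s^n)`. -/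
def chowIdeal (n s : ℕ) : Ideal (MvPolynomial (Fin (s + 1)) ℤ) :=
  Ideal.span ({MvPolynomial.X 0 ^ n ^ 2} ∪
    Set.range fun j : Fin s => MvPolynomial.X j.succ ^ n)

/-- The Chow ring `A^*(ℙ_s) = ℤ[h_0, …, h_s]/(h_0^{n²}, h_1^n, …, h_s^n)`. -/
abbrev ChowRing (n s : ℕ) := MvPolynomial (Fin (s + 1)) ℤ ⧸ chowIdeal n s

/-- The variable substitution `h_0 ↦ t_0`, `h_i ↦ t_{q_i}` underlying `φ_P`. -/
def blockVarMap {s k : ℕ} (P : IdxPartition s k) : Fin (k + 1) → Fin (s + 1) :=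
  Fin.cases 0 fun i => (P.rep i).succ

lemma phiP_aux {n s k : ℕ} (P : IdxPartition s k) :
    ∀ a ∈ chowIdeal n k,
      ((Ideal.Quotient.mk (chowIdeal n s)).comp
        (MvPolynomial.rename (R := ℤ) (blockVarMap P)).toRingHom) a = 0 := by
  intro a ha
  rw [RingHom.comp_apply, Ideal.Quotient.eq_zero_iff_mem]
  have hmap : (MvPolynomial.rename (R := ℤ) (blockVarMap P)).toRingHom a ∈
      Ideal.map (MvPolynomial.rename (R := ℤ) (blockVarMap P)).toRingHom
        (chowIdeal n k) :=
    Ideal.mem_map_of_mem _ ha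
  have hle : Ideal.map
      (MvPolynomial.rename (R := ℤ) (blockVarMap P)).toRingHom
      (chowIdeal n k) ≤ chowIdeal n s := by
    rw [chowIdeal, Ideal.map_span, Ideal.span_le]
    rintro q ⟨p, hp, rfl⟩
    rcases hp with hp | ⟨j, rfl⟩
    · rw [Set.mem_singleton_iff] at hp
      subst hp
      simp only [AlgHom.toRingHom_eq_coe, RingHom.coe_coe, map_pow, MvPolynomial.rename_X,
        Fin.cases_zero]
      exact Ideal.subset_span (Or.inl rfl)
    · simp only [AlgHom.toRingHom_eq_coe, RingHom.coe_coe, map_pow, MvPolynomial.rename_X,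
        Fin.cases_succ]
      exact Ideal.subset_span (Or.inr ⟨P.rep j, rfl⟩)
  exact hle hmap

/-- The ring map `φ_P : A^*(ℙ_k) → A^*(ℙ_s)` sending `h_0 ↦ t_0` and `h_i ↦ t_{q_i}`. -/
def phiP (n : ℕ) {s k : ℕ} (P : IdxPartition s k) : ChowRing n k →+* ChowRing n s :=
  Ideal.Quotient.lift (chowIdeal n k)
    ((Ideal.Quotient.mk (chowIdeal n s)).comp
      (MvPolynomial.rename (R := ℤ) (blockVarMap P)).toRingHom)
    (phiP_aux P)



/-! ## Discriminants of characteristic polynomials -/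

/-- `∏_{i<j} (l i - l j)^2` for a list `l`. -/
def listPairProdSq (l : List ℂ) : ℂ :=
  ∏ p ∈ Finset.univ.filter (fun p : Fin l.length × Fin l.length => p.1 < p.2),
    (l.get p.1 - l.get p.2) ^ 2

/-- The product of the squared differences of all pairs of elements of a multiset; applied to
the multiset of roots of a characteristic polynomial this is the discriminant. -/
def pairProdSq (m : Multiset ℂ) : ℂ := listPairProdSq m.toList

/-- The coordinate vector (for the action of the symmetric power `ρ_d`) of the symmetric
product `v_1 ⋯ v_d` of the vectors `v i`: its `σ`-th coordinate is the coefficient of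
`t_1 ⋯ t_d` in `∏_k (∑_i t_i v i k)^{σ_k}`. -/
def symProdVec {n d : ℕ} (v : Fin d → Fin n → ℂ) : MonIdx n d → ℂ := fun σ =>
  MvPolynomial.coeff (Finsupp.equivFunOnFinite.symm fun _ : Fin d => 1)
    (∏ k : Fin n, (∑ i : Fin d, MvPolynomial.C (v i k) * MvPolynomial.X i) ^ (monExp σ k))

/-! If `v` is an eigenvector of `A` lying on `X`, its Veronese image `w = ν_d(v)`, the vector of
degree-`d` monomials in `v`, is an eigenvector of `ρ_d(A)`, since `ρ_d(A) ν_d(v) = ν_d(A v)`.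
Pairing a coefficient vector of a form `g` of degree `d` with `w` evaluates `g` at `v`, so every
row of `C_X` is orthogonal to `w`, and hence so is every row `C_X ρ_d(A)^i` of the Kalman
matrix. Thus `K_d(C_X)` evaluated at `A` has the nonzero vector `w` in its kernel, and all its
maximal minors vanish. -/

open MvPolynomial Matrix

section Veronese

variable {n d : ℕ}

/-- The Veronese map `ν_d : v ↦ (v^σ)_σ`, in the monomial basis of forms of degree `d`. -/
def veronese {R : Type*} [CommSemiring R] (d : ℕ) (v : Fin n → R) : MonIdx n d → R :=
  fun σ => ∏ k, v k ^ monExp σ k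

lemma monExp_injective : Function.Injective (monExp (n := n) (d := d)) :=
  fun _ _ h => Sym.coe_injective (Multiset.toFinsupp.injective h)

lemma degree_monExp (σ : MonIdx n d) : (monExp σ).degree = d := by
  simp [monExp, Finsupp.degree_apply]

lemma sum_monExp (σ : MonIdx n d) : ∑ j, monExp σ j = d := by
  rw [← Finsupp.degree_eq_sum, degree_monExp]

lemma exists_monExp_eq {m : Fin n →₀ ℕ} (hm : m.degree = d) : ∃ σ : MonIdx n d, monExp σ = m :=
  ⟨⟨Finsupp.toMultiset m, by simpa [Finsupp.degree_apply, Finsupp.sum] using hm⟩,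
    Finsupp.toMultiset_toFinsupp m⟩

lemma monExp_replicate (k : Fin n) : monExp (Sym.replicate d k) = Finsupp.single k d := by
  ext j
  simp [monExp, Sym.coe_replicate, Multiset.count_replicate, Finsupp.single_apply]

lemma veronese_ne_zero {R : Type*} [CommSemiring R] [NoZeroDivisors R]
    {v : Fin n → R} (hv : v ≠ 0) : veronese d v ≠ 0 := by
  obtain ⟨k, hk⟩ := Function.ne_iff.mp hv
  refine Function.ne_iff.mpr ⟨Sym.replicate d k, ?_⟩
  simpa [veronese, monExp_replicate, Finsupp.single_apply] using pow_ne_zero d hk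

lemma veronese_smul {R : Type*} [CommSemiring R] (c : R) (v : Fin n → R) :
    veronese d (c • v) = c ^ d • veronese d v := by
  ext σ
  simp [veronese, mul_pow, Finset.prod_mul_distrib, Finset.prod_pow_eq_pow_sum, sum_monExp]

lemma sum_coeff_mul_veronese {R : Type*} [CommSemiring R] {P : MvPolynomial (Fin n) R}
    (hP : P.IsHomogeneous d) (v : Fin n → R) :
    ∑ σ : MonIdx n d, coeff (monExp σ) P * veronese d v σ = eval v P := by
  rw [eval_eq']
  refine Finset.sum_bij_ne_zero (fun σ _ _ => monExp σ) ?_ ?_ ?_ ?_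
  · exact fun σ _ h => mem_support_iff.mpr (left_ne_zero_of_mul h)
  · exact fun σ _ _ τ _ _ h => monExp_injective h
  · intro m hm hterm
    obtain ⟨σ, rfl⟩ := exists_monExp_eq (d := d) (by
      by_contra hne
      exact mem_support_iff.mp hm (hP.coeff_eq_zero hne))
    exact ⟨σ, Finset.mem_univ σ, hterm, rfl⟩
  · exact fun σ _ _ => rfl

lemma coeffVec_dotProduct_veronese {f : MvPolynomial (Fin n) ℂ} (hf : f.IsHomogeneous d)
    (v : Fin n → ℂ) : coeffVec d f ⬝ᵥ veronese d v = eval v f :=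
  sum_coeff_mul_veronese hf v

end Veronese

section SymmetricPower

variable {n d : ℕ}

lemma isHomogeneous_prod_linearForm_pow {R : Type*} [CommRing R] (B : Matrix (Fin n) (Fin n) R)
    (τ : MonIdx n d) :
    (∏ j, (∑ k, C (B j k) * X k) ^ monExp τ j : MvPolynomial (Fin n) R).IsHomogeneous d := by
  have hlin (j : Fin n) : (∑ k, C (B j k) * X k : MvPolynomial (Fin n) R).IsHomogeneous 1 :=
    IsHomogeneous.sum _ _ 1 fun k _ => isHomogeneous_C_mul_X (B j k) k
  simpa [sum_monExp] using IsHomogeneous.prod Finset.univ _ (fun j => monExp τ j)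
    fun j _ => by simpa using (hlin j).pow (monExp τ j)

lemma symPow_mulVec_veronese {R : Type*} [CommRing R] (B : Matrix (Fin n) (Fin n) R)
    (v : Fin n → R) : symPow d B *ᵥ veronese d v = veronese d (B *ᵥ v) := by
  ext τ
  rw [mulVec, dotProduct]
  refine (sum_coeff_mul_veronese (isHomogeneous_prod_linearForm_pow B τ) v).trans ?_
  simp [veronese, mulVec, dotProduct, mul_comm]

lemma symPow_map {R S : Type*} [CommRing R] [CommRing S] (φ : R →+* S)
    (B : Matrix (Fin n) (Fin n) R) : (symPow d B).map φ = symPow d (B.map φ) := by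
  ext τ σ
  simp [symPow, ← coeff_map, map_prod, map_sum]

lemma genMat_map_eval (A : MatSpace n) : (genMat n).map (eval A) = toMat A := by
  ext i j
  simp [genMat, toMat]

lemma pow_mulVec_eq_smul {R ι : Type*} [CommRing R] [Fintype ι] [DecidableEq ι]
    {M : Matrix ι ι R} {w : ι → R} {μ : R} (h : M *ᵥ w = μ • w) (m : ℕ) :
    (M ^ m) *ᵥ w = μ ^ m • w := by
  induction m with
  | zero => simp
  | succ m ih => rw [pow_succ', ← mulVec_mulVec, ih, mulVec_smul, h, smul_smul, pow_succ]

end SymmetricPower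

lemma coeffVec_pow_dotProduct_veronese_eq_zero {n e d : ℕ} {f : MvPolynomial (Fin n) ℂ}
    (hf : f.IsHomogeneous e) (he : 0 < e) (hed : e ∣ d) (hd : 0 < d) {v : Fin n → ℂ}
    (hfv : eval v f = 0) : coeffVec d (f ^ (d / e)) ⬝ᵥ veronese d v = 0 := by
  have hpow : (f ^ (d / e)).IsHomogeneous d := by
    simpa [Nat.mul_div_cancel' hed] using hf.pow (d / e)
  rw [coeffVec_dotProduct_veronese hpow, map_pow, hfv,
    zero_pow (Nat.div_pos (Nat.le_of_dvd hd hed) he).ne']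

lemma dotProduct_eq_zero_of_mem_span {R ι : Type*} [CommSemiring R] [Fintype ι]
    {s : Set (ι → R)} {w u : ι → R} (hs : ∀ x ∈ s, x ⬝ᵥ w = 0)
    (hu : u ∈ Submodule.span R s) : u ⬝ᵥ w = 0 := by
  induction hu using Submodule.span_induction with
  | mem x hx => exact hs x hx
  | zero => exact zero_dotProduct w
  | add x y _ _ hx hy => rw [add_dotProduct, hx, hy, add_zero]
  | smul c x _ hx => rw [smul_dotProduct, hx, smul_zero]

section Kalman

variable {n d : ℕ}

lemma kalmanMat_map_eval {p : ℕ} (t : ℕ) (C : Matrix (Fin p) (MonIdx n d) ℂ) (A : MatSpace n) :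
    (kalmanMat t C).map (eval A) = of fun r => C r.2 ᵥ* symPow d (toMat A) ^ (r.1 : ℕ) := by
  ext r τ
  have hpow : (symPow d (genMat n) ^ (r.1 : ℕ)).map (eval A) = symPow d (toMat A) ^ (r.1 : ℕ) := by
    rw [← RingHom.mapMatrix_apply, map_pow, RingHom.mapMatrix_apply, symPow_map, genMat_map_eval]
  simp [kalmanMat, vecMul, dotProduct, ← hpow]

lemma kalmanMat_map_eval_mulVec_eq_zero {p : ℕ} (t : ℕ) {C : Matrix (Fin p) (MonIdx n d) ℂ}
    {A : MatSpace n} {w : MonIdx n d → ℂ} {μ : ℂ} (hC : ∀ r, C r ⬝ᵥ w = 0)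
    (hw : symPow d (toMat A) *ᵥ w = μ • w) : (kalmanMat t C).map (eval A) *ᵥ w = 0 := by
  ext r
  rw [kalmanMat_map_eval]
  simp [mulVec, ← dotProduct_mulVec, pow_mulVec_eq_smul hw, hC]

lemma mem_maxMinorsZeroSet_of_mulVec_eq_zero {ρ : Type*}
    {M : Matrix ρ (MonIdx n d) (MvPolynomial (Fin n × Fin n) ℂ)} {A : MatSpace n}
    {w : MonIdx n d → ℂ} (hw : w ≠ 0) (hMw : M.map (eval A) *ᵥ w = 0) :
    A ∈ maxMinorsZeroSet M := by
  classical
  intro e _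
  rw [RingHom.map_det, ← exists_mulVec_eq_zero_iff]
  exact ⟨w, hw, funext fun σ => congrFun hMw (e σ)⟩

end Kalman

theorem kalman_subset_max_minors_general (n p : ℕ)
    (f : Fin p → MvPolynomial (Fin n) ℂ) (deg : Fin p → ℕ)
    (hdegpos : ∀ i, 0 < deg i)
    (hhom : ∀ i, (f i).IsHomogeneous (deg i))
    (X : Set (Fin n → ℂ)) (hX : X = {x | ∀ i, MvPolynomial.eval x (f i) = 0})
    (d : ℕ) (hd : d = Finset.univ.lcm deg)
    (q : ℕ) (C : Matrix (Fin q) (MonIdx n d) ℂ)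
    (hCspan : Submodule.span ℂ (Set.range fun r : Fin q => C r) =
      Submodule.span ℂ (Set.range fun i : Fin p => coeffVec d ((f i) ^ (d / deg i)))) :
    kalmanCone X ⊆ maxMinorsZeroSet (kalmanMat (Nat.choose (n - 1 + d) d - q + 1) C) := by
  rintro A ⟨v, hvX, hv0, lam, hAv⟩
  have hfv : ∀ i, eval v (f i) = 0 := by simpa [hX] using hvX
  have hdvd (i : Fin p) : deg i ∣ d := hd ▸ Finset.dvd_lcm (Finset.mem_univ i)
  have hdpos : 0 < d := by
    refine Nat.pos_of_ne_zero fun hd0 => ?_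
    obtain ⟨i, -, hi⟩ := Finset.lcm_eq_zero_iff.mp (hd ▸ hd0)
    exact (hdegpos i).ne' hi
  have hrows (r : Fin q) : C r ⬝ᵥ veronese d v = 0 := by
    have hmem : C r ∈ Submodule.span ℂ (Set.range fun i => coeffVec d (f i ^ (d / deg i))) :=
      hCspan ▸ Submodule.subset_span ⟨r, rfl⟩
    refine dotProduct_eq_zero_of_mem_span ?_ hmem
    rintro _ ⟨i, rfl⟩
    exact coeffVec_pow_dotProduct_veronese_eq_zero (hhom i) (hdegpos i) (hdvd i) hdpos (hfv i)
  have heig : symPow d (toMat A) *ᵥ veronese d v = lam ^ d • veronese d v := by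
    rw [symPow_mulVec_veronese, hAv, veronese_smul]
  exact mem_maxMinorsZeroSet_of_mulVec_eq_zero (veronese_ne_zero hv0)
    (kalmanMat_map_eval_mulVec_eq_zero _ hrows heig)

/-- If the vanishing ideal of `X ⊆ ℙ^{n-1}` is minimally generated by
homogeneous polynomials `f_1, …, f_p` of degrees `d_1 ≤ ⋯ ≤ d_p`, `d = lcm(d_1, …, d_p)`,
and `C_X` is a matrix whose rows form a basis of the span of the coefficient vectors of the
`f_i^{d/d_i}`, then `𝒦(X)` is contained in the variety cut out by the maximal minors of the
Kalman matrix `K_d(C_X)` of order `d`. -/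
theorem kalman_subset_max_minors (n p : ℕ) (hn : 0 < n) (hp : 0 < p)
    (f : Fin p → MvPolynomial (Fin n) ℂ) (deg : Fin p → ℕ)
    (hdegpos : ∀ i, 0 < deg i)
    (hdegmono : ∀ i j : Fin p, i ≤ j → deg i ≤ deg j)
    (hhom : ∀ i, (f i).IsHomogeneous (deg i))
    (X : Set (Fin n → ℂ)) (hX : X = {x | ∀ i, MvPolynomial.eval x (f i) = 0})
    (hvan : vanishingIdealOf X = Ideal.span (Set.range f))
    (hminimal : ∀ i, f i ∉ Ideal.span (f '' {j | j ≠ i}))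
    (d : ℕ) (hd : d = Finset.univ.lcm deg)
    (q : ℕ) (C : Matrix (Fin q) (MonIdx n d) ℂ)
    (hCli : LinearIndependent ℂ (fun r : Fin q => C r))
    (hCspan : Submodule.span ℂ (Set.range fun r : Fin q => C r) =
      Submodule.span ℂ (Set.range fun i : Fin p => coeffVec d ((f i) ^ (d / deg i)))) :
    kalmanCone X ⊆ maxMinorsZeroSet (kalmanMat (Nat.choose (n - 1 + d) d - q + 1) C) :=
  kalman_subset_max_minors_general n p f deg hdegpos hhom X hX d hd q C hCspan

end
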